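/- arXiv:2303.01464 — 6 statements merged into one kernel-verified Lean document; each statement's English description precedes it below -/
import Mathlib

section
/- Let P and Q be probability measures on a finite set X and h : X → ℝ with 0 ≤ h(x) ≤ R for all x. Then |E_P[h] − E_Q[h]| ≤ √(2R · (E_P[h] + E_Q[h]) · D²_H(P,Q)), where D²_H is the squared Hellinger distance. -/
open Finset Real

theorem change_of_measure_hellinger
    {X : Type*} [Fintype X] (P Q : X → ℝ) (h : X → ℝ) (R : ℝ)
    (hP0 : ∀ x, 0 ≤ P x) (hPsum : ∑ x, P x = 1)
    (hQ0 : ∀ x, 0 ≤ Q x) (hQsum : ∑ x, Q x = 1)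
    (hR : 0 < R) (hh0 : ∀ x, 0 ≤ h x) (hhR : ∀ x, h x ≤ R) :
    |(∑ x, P x * h x) - ∑ x, Q x * h x| ≤
      Real.sqrt (2 * R * ((∑ x, P x * h x) + ∑ x, Q x * h x) *
        ∑ x, (Real.sqrt (P x) - Real.sqrt (Q x)) ^ 2) := by
  set a : X → ℝ := fun x => (Real.sqrt (P x) - Real.sqrt (Q x)) * Real.sqrt (h x) with ha
  set b : X → ℝ := fun x => (Real.sqrt (P x) + Real.sqrt (Q x)) * Real.sqrt (h x) with hb
  have hab : ∀ x, a x * b x = P x * h x - Q x * h x := by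
    intro x
    have hp : Real.sqrt (P x) * Real.sqrt (P x) = P x := Real.mul_self_sqrt (hP0 x)
    have hq : Real.sqrt (Q x) * Real.sqrt (Q x) = Q x := Real.mul_self_sqrt (hQ0 x)
    have hhh : Real.sqrt (h x) * Real.sqrt (h x) = h x := Real.mul_self_sqrt (hh0 x)
    simp only [ha, hb]
    nlinarith [hp, hq, hhh]
  apply Real.abs_le_sqrt
  have key : ((∑ x, P x * h x) - ∑ x, Q x * h x) ^ 2
      ≤ (∑ x, a x ^ 2) * (∑ x, b x ^ 2) := by
    calc ((∑ x, P x * h x) - ∑ x, Q x * h x) ^ 2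
        = (∑ x, a x * b x) ^ 2 := by
          rw [← Finset.sum_sub_distrib]; simp_rw [hab]
      _ ≤ (∑ x, a x ^ 2) * (∑ x, b x ^ 2) :=
          Finset.sum_mul_sq_le_sq_mul_sq Finset.univ a b
  have hA : (∑ x, a x ^ 2) ≤ R * ∑ x, (Real.sqrt (P x) - Real.sqrt (Q x)) ^ 2 := by
    rw [Finset.mul_sum]
    apply Finset.sum_le_sum
    intro x _
    have ha2 : a x ^ 2 = (Real.sqrt (P x) - Real.sqrt (Q x)) ^ 2 * h x := by
      simp only [ha, mul_pow, Real.sq_sqrt (hh0 x)]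
    rw [ha2, mul_comm R]
    exact mul_le_mul_of_nonneg_left (hhR x) (sq_nonneg _)
  have hB : (∑ x, b x ^ 2) ≤ 2 * ((∑ x, P x * h x) + ∑ x, Q x * h x) := by
    have : 2 * ((∑ x, P x * h x) + ∑ x, Q x * h x)
        = ∑ x, 2 * (P x * h x + Q x * h x) := by
      rw [← Finset.sum_add_distrib, ← Finset.mul_sum]
    rw [this]
    apply Finset.sum_le_sum
    intro x _
    have hb2 : b x ^ 2 = (Real.sqrt (P x) + Real.sqrt (Q x)) ^ 2 * h x := by
      simp only [hb, mul_pow, Real.sq_sqrt (hh0 x)]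
    have hsq : (Real.sqrt (P x) + Real.sqrt (Q x)) ^ 2 ≤ 2 * (P x + Q x) := by
      nlinarith [Real.sq_sqrt (hP0 x), Real.sq_sqrt (hQ0 x),
        sq_nonneg (Real.sqrt (P x) - Real.sqrt (Q x))]
    rw [hb2]
    nlinarith [hh0 x, hsq]
  have hAnn : 0 ≤ ∑ x, a x ^ 2 := Finset.sum_nonneg fun x _ => sq_nonneg _
  have hBnn : 0 ≤ ∑ x, b x ^ 2 := Finset.sum_nonneg fun x _ => sq_nonneg _
  calc ((∑ x, P x * h x) - ∑ x, Q x * h x) ^ 2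
      ≤ (∑ x, a x ^ 2) * (∑ x, b x ^ 2) := key
    _ ≤ (R * ∑ x, (Real.sqrt (P x) - Real.sqrt (Q x)) ^ 2)
        * (2 * ((∑ x, P x * h x) + ∑ x, Q x * h x)) := by
        apply mul_le_mul hA hB hBnn
        positivity
    _ = 2 * R * ((∑ x, P x * h x) + ∑ x, Q x * h x)
        * ∑ x, (Real.sqrt (P x) - Real.sqrt (Q x)) ^ 2 := by ring
end

section
/- Let P and Q be probability measures on a finite set X and h : X → ℝ with 0 ≤ h(x) ≤ R. Then E_P[h] ≤ 3·E_Q[h] + 4R·D²_H(P,Q). -/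
open Finset Real

theorem change_of_measure_hellinger_linear
    {X : Type*} [Fintype X] (P Q : X → ℝ) (h : X → ℝ) (R : ℝ)
    (hP0 : ∀ x, 0 ≤ P x) (hPsum : ∑ x, P x = 1)
    (hQ0 : ∀ x, 0 ≤ Q x) (hQsum : ∑ x, Q x = 1)
    (hh0 : ∀ x, 0 ≤ h x) (hhR : ∀ x, h x ≤ R) :
    ∑ x, P x * h x ≤ 3 * ∑ x, Q x * h x +
      4 * R * ∑ x, (Real.sqrt (P x) - Real.sqrt (Q x)) ^ 2 := by
  rw [Finset.mul_sum, Finset.mul_sum, ← Finset.sum_add_distrib]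
  apply Finset.sum_le_sum
  intro x _
  have ha := Real.sq_sqrt (hP0 x)
  have hb := Real.sq_sqrt (hQ0 x)
  have ha0 := Real.sqrt_nonneg (P x)
  have hb0 := Real.sqrt_nonneg (Q x)
  have hkey : P x ≤ 3 * Q x + 4 * (Real.sqrt (P x) - Real.sqrt (Q x)) ^ 2 := by
    nlinarith [sq_nonneg (3 * Real.sqrt (P x) - 4 * Real.sqrt (Q x))]
  have hR0 : 0 ≤ R := le_trans (hh0 x) (hhR x)
  nlinarith [hh0 x, hhR x, sq_nonneg (Real.sqrt (P x) - Real.sqrt (Q x)),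
    mul_le_mul_of_nonneg_right hkey (hh0 x)]
end

section
/- Let P and Q be probability measures on a finite set X, h : X → ℝ with 0 ≤ h(x) ≤ R, and β ≥ 1. Then E_P[h] ≤ (1 + 1/β)·E_Q[h] + 3βR·D²_H(P,Q). -/
open Finset Real

theorem change_of_measure_hellinger_refined
    {X : Type*} [Fintype X] (P Q : X → ℝ) (h : X → ℝ) (R β : ℝ)
    (hP0 : ∀ x, 0 ≤ P x) (hPsum : ∑ x, P x = 1)
    (hQ0 : ∀ x, 0 ≤ Q x) (hQsum : ∑ x, Q x = 1)
    (hh0 : ∀ x, 0 ≤ h x) (hhR : ∀ x, h x ≤ R) (hβ : 1 ≤ β) :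
    ∑ x, P x * h x ≤ (1 + 1 / β) * ∑ x, Q x * h x +
      3 * β * R * ∑ x, (Real.sqrt (P x) - Real.sqrt (Q x)) ^ 2 := by
  have hβ0 : 0 < β := lt_of_lt_of_le one_pos hβ
  have hne : Nonempty X := by
    by_contra hc
    rw [not_nonempty_iff] at hc
    simp [Finset.sum_of_isEmpty] at hPsum
  obtain ⟨x0⟩ := hne
  have hR : 0 ≤ R := le_trans (hh0 x0) (hhR x0)
  have hinv : β * (1 / β) = 1 := mul_one_div_cancel (ne_of_gt hβ0)
  rw [Finset.mul_sum, Finset.mul_sum, ← Finset.sum_add_distrib]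
  apply Finset.sum_le_sum
  intro x _
  have ha : Real.sqrt (P x) ^ 2 = P x := Real.sq_sqrt (hP0 x)
  have hb : Real.sqrt (Q x) ^ 2 = Q x := Real.sq_sqrt (hQ0 x)
  set a := Real.sqrt (P x) with ha'
  set b := Real.sqrt (Q x) with hb'
  have key1 : P x ≤ (1 + 1 / β) * Q x + (1 + β) * (a - b) ^ 2 := by
    nlinarith [sq_nonneg (β * (a - b) - b), hβ0, hinv, sq_nonneg (a - b)]
  have key2 : P x * h x ≤ ((1 + 1 / β) * Q x + (1 + β) * (a - b) ^ 2) * h x :=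
    mul_le_mul_of_nonneg_right key1 (hh0 x)
  nlinarith [key2, mul_le_mul_of_nonneg_left (hhR x) (sq_nonneg (a - b)),
    mul_nonneg (sq_nonneg (a - b)) (hh0 x), sq_nonneg (a - b), hβ, hR,
    mul_le_mul_of_nonneg_right (hhR x) hR]
end

section
/- Fix γ > 0, a finite index set I of size N, a vector f ∈ [0,1]^I, and a convex set K ⊆ (0,1]^I. Define L(q) = ∑_{i∈I} q_i f_i + (1/γ) ∑_{i∈I} log q_i and let q̂ ∈ K maximize L over K. Then for every q* ∈ K: ∑_{i∈I} (q*_i − q̂_i) f_i ≤ N/γ − (1/γ) ∑_{i∈I} q*_i / q̂_i. -/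
open Finset Real

theorem comparator_suboptimality_logbarrier
    {I : Type*} [Fintype I] (γ : ℝ) (hγ : 0 < γ)
    (f : I → ℝ) (hf0 : ∀ i, 0 ≤ f i) (hf1 : ∀ i, f i ≤ 1)
    (K : Set (I → ℝ)) (hK : Convex ℝ K)
    (hKpos : ∀ q ∈ K, ∀ i, 0 < q i) (hKone : ∀ q ∈ K, ∀ i, q i ≤ 1)
    (qhat : I → ℝ) (hqhatK : qhat ∈ K)
    (hmax : ∀ q ∈ K,
      (∑ i, q i * f i) + (1 / γ) * ∑ i, Real.log (q i) ≤
      (∑ i, qhat i * f i) + (1 / γ) * ∑ i, Real.log (qhat i)) :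
    ∀ qstar ∈ K,
      ∑ i, (qstar i - qhat i) * f i ≤
        (Fintype.card I : ℝ) / γ - (1 / γ) * ∑ i, qstar i / qhat i := by
  intro qstar hqstarK
  set d : I → ℝ := fun i => qstar i - qhat i with hd
  have hqhatpos : ∀ i, 0 < qhat i := hKpos qhat hqhatK
  -- key step: for t ∈ (0,1], ∑ d f ≤ -(1/γ) * ∑ d/(qhat + t d)
  have key : ∀ t ∈ Set.Ioc (0:ℝ) 1,
      ∑ i, d i * f i ≤ -(1/γ) * ∑ i, d i / (qhat i + t * d i) := by
    intro t ht
    obtain ⟨ht0, ht1⟩ := ht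
    set qt : I → ℝ := fun i => qhat i + t * d i with hqt
    have hqtK : qt ∈ K := by
      have := hK hqhatK hqstarK (by linarith : (0:ℝ) ≤ 1 - t) (le_of_lt ht0)
        (by ring)
      convert this using 1
      funext i
      simp only [Pi.add_apply, Pi.smul_apply, smul_eq_mul, hqt, hd]
      ring
    have hqtpos : ∀ i, 0 < qt i := hKpos qt hqtK
    have h1 := hmax qt hqtK
    have hsum : ∑ i, qt i * f i = (∑ i, qhat i * f i) + t * ∑ i, d i * f i := by
      rw [Finset.mul_sum, ← Finset.sum_add_distrib]
      refine Finset.sum_congr rfl fun i _ => ?_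
      simp only [hqt]; ring
    have h2 : t * ∑ i, d i * f i ≤ (1/γ) * ∑ i, (Real.log (qhat i) - Real.log (qt i)) := by
      rw [Finset.sum_sub_distrib, mul_sub]
      rw [hsum] at h1
      linarith
    have h3 : ∀ i, Real.log (qhat i) - Real.log (qt i) ≤ -(t * d i / qt i) := by
      intro i
      have hz : Real.log (qhat i / qt i) ≤ qhat i / qt i - 1 :=
        Real.log_le_sub_one_of_pos (div_pos (hqhatpos i) (hqtpos i))
      rw [Real.log_div (ne_of_gt (hqhatpos i)) (ne_of_gt (hqtpos i))] at hz
      have hne : qt i ≠ 0 := (hqtpos i).ne'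
      have hqti : qt i = qhat i + t * d i := rfl
      have : qhat i / qt i - 1 = -(t * d i / qt i) := by
        rw [div_sub_one hne, ← neg_div]
        congr 1
        rw [hqti]; ring
      linarith [this ▸ hz]
    have h4 : (1/γ) * ∑ i, (Real.log (qhat i) - Real.log (qt i)) ≤
        (1/γ) * ∑ i, -(t * d i / qt i) := by
      apply mul_le_mul_of_nonneg_left
      · exact Finset.sum_le_sum fun i _ => h3 i
      · positivity
    have h5 : t * ∑ i, d i * f i ≤ (1/γ) * ∑ i, -(t * d i / qt i) := le_trans h2 h4
    have h6 : (1/γ) * ∑ i, -(t * d i / qt i) = t * (-(1/γ) * ∑ i, d i / qt i) := by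
      simp only [Finset.mul_sum]
      refine Finset.sum_congr rfl fun i _ => ?_
      ring
    rw [h6] at h5
    exact le_of_mul_le_mul_left (by linarith) ht0
  -- take limit t → 0+
  have hlim : Filter.Tendsto (fun t => -(1/γ) * ∑ i, d i / (qhat i + t * d i))
      (nhdsWithin 0 (Set.Ioi (0:ℝ))) (nhds (-(1/γ) * ∑ i, d i / qhat i)) := by
    have hc : Filter.Tendsto (fun t : ℝ => ∑ i, d i / (qhat i + t * d i)) (nhds 0)
        (nhds (∑ i, d i / (qhat i + 0 * d i))) := by
      apply tendsto_finset_sum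
      intro i _
      exact (ContinuousAt.div continuousAt_const (by fun_prop)
        (by simpa using (hqhatpos i).ne')).tendsto
    simp only [zero_mul, add_zero] at hc
    exact (hc.const_mul _).mono_left nhdsWithin_le_nhds
  have hev : ∀ᶠ t in nhdsWithin 0 (Set.Ioi (0:ℝ)),
      ∑ i, d i * f i ≤ -(1/γ) * ∑ i, d i / (qhat i + t * d i) := by
    have hmem : Set.Ioc (0:ℝ) 1 ∈ nhdsWithin 0 (Set.Ioi (0:ℝ)) := by
      rw [mem_nhdsWithin]
      exact ⟨Set.Iio 1, isOpen_Iio, by norm_num, fun x hx => ⟨hx.2, le_of_lt hx.1⟩⟩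
    filter_upwards [hmem] with t ht using key t ht
  have hfinal : ∑ i, d i * f i ≤ -(1/γ) * ∑ i, d i / qhat i :=
    ge_of_tendsto hlim hev
  have heq : -(1/γ) * ∑ i, d i / qhat i =
      (Fintype.card I : ℝ) / γ - (1/γ) * ∑ i, qstar i / qhat i := by
    have : ∀ i, d i / qhat i = qstar i / qhat i - 1 := by
      intro i
      show (qstar i - qhat i) / qhat i = _
      rw [sub_div, div_self (hqhatpos i).ne']
    simp only [this, Finset.sum_sub_distrib, Finset.sum_const, Finset.card_univ,
      nsmul_eq_mul, mul_one]
    ring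
  linarith [heq ▸ hfinal]
end

section
/- Let M = (S,A,P,r,s₀,H) and M̂ = (S,A,P̂,r,s₀,H) be two finite-horizon MDPs sharing the same bounded reward r : S×A → [0,1]. Then for any policy π and any step h, V^π_{M̂,h}(s) ≤ (1+1/H)^{H−h} [ V^π_{M,h}(s) + E_{P,π}[ ∑_{h'=h}^{H−1} 3H² D²_H(P̂(·|s_{h'},a_{h'}), P(·|s_{h'},a_{h'})) | s_h = s ] ]. -/
open Finset

variable {S A : Type*} [Fintype S] [Fintype A]

/-- Value function defined by the Bellman backward recursion:
`val H π P r h s` is the expected sum of rewards from step `h` to `H-1`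
starting at `s`, under policy `π` and dynamics `P` (with `P s a s'` the
probability of transitioning to `s'` from `(s,a)`). -/
def val (H : ℕ) (π : ℕ → S → A → ℝ) (P : S → A → S → ℝ) (r : S → A → ℝ) :
    ℕ → S → ℝ
  | h, s =>
    if _ : h < H then
      ∑ a, π h s a * (r s a + ∑ s', P s a s' * val H π P r (h + 1) s')
    else 0
  termination_by h _ => H - h
  decreasing_by omega

lemma val_eq_of_lt (H : ℕ) (π : ℕ → S → A → ℝ) (P : S → A → S → ℝ) (r : S → A → ℝ)
    {h : ℕ} (hh : h < H) (s : S) :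
    val H π P r h s =
      ∑ a, π h s a * (r s a + ∑ s', P s a s' * val H π P r (h + 1) s') := by
  rw [_root_.val, dif_pos hh]

lemma val_eq_of_ge (H : ℕ) (π : ℕ → S → A → ℝ) (P : S → A → S → ℝ) (r : S → A → ℝ)
    {h : ℕ} (hh : ¬ h < H) (s : S) : val H π P r h s = 0 := by
  rw [_root_.val, dif_neg hh]

lemma val_nonneg (H : ℕ) (π : ℕ → S → A → ℝ) (P : S → A → S → ℝ) (r : S → A → ℝ)
    (hπ0 : ∀ h s a, 0 ≤ π h s a) (hP0 : ∀ s a s', 0 ≤ P s a s')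
    (hr0 : ∀ s a, 0 ≤ r s a) : ∀ h s, 0 ≤ val H π P r h s := by
  suffices key : ∀ n h, H - h ≤ n → ∀ s : S, 0 ≤ val H π P r h s by
    intro h s; exact key (H - h) h le_rfl s
  intro n
  induction n with
  | zero =>
    intro h hh s
    rw [val_eq_of_ge H π P r (by omega) s]
  | succ n ih =>
    intro h hh s
    by_cases hhH : h < H
    · rw [val_eq_of_lt H π P r hhH s]
      refine sum_nonneg fun a _ => mul_nonneg (hπ0 _ _ _) (add_nonneg (hr0 _ _) ?_)
      exact sum_nonneg fun s' _ => mul_nonneg (hP0 _ _ _) (ih (h+1) (by omega) s')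
    · rw [val_eq_of_ge H π P r hhH s]

lemma val_le (H : ℕ) (π : ℕ → S → A → ℝ) (P : S → A → S → ℝ) (r : S → A → ℝ)
    (hπ0 : ∀ h s a, 0 ≤ π h s a) (hπ1 : ∀ h s, ∑ a, π h s a = 1)
    (hP0 : ∀ s a s', 0 ≤ P s a s') (hP1 : ∀ s a, ∑ s', P s a s' = 1)
    (hr1 : ∀ s a, r s a ≤ 1) : ∀ h s, val H π P r h s ≤ ((H - h : ℕ) : ℝ) := by
  suffices key : ∀ n h, H - h ≤ n → ∀ s : S, val H π P r h s ≤ ((H - h : ℕ) : ℝ) by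
    intro h s; exact key (H - h) h le_rfl s
  intro n
  induction n with
  | zero =>
    intro h hh s
    rw [val_eq_of_ge H π P r (by omega) s]
    positivity
  | succ n ih =>
    intro h hh s
    by_cases hhH : h < H
    · rw [val_eq_of_lt H π P r hhH s]
      have key : ∀ a : A, π h s a * (r s a + ∑ s', P s a s' * val H π P r (h+1) s')
          ≤ π h s a * ((H - h : ℕ) : ℝ) := by
        intro a
        apply mul_le_mul_of_nonneg_left _ (hπ0 h s a)
        have h1 : ∑ s', P s a s' * val H π P r (h+1) s'
            ≤ ((H - (h+1) : ℕ) : ℝ) := by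
          calc ∑ s', P s a s' * val H π P r (h+1) s'
              ≤ ∑ s', P s a s' * ((H - (h+1) : ℕ) : ℝ) :=
                sum_le_sum fun s' _ =>
                  mul_le_mul_of_nonneg_left (ih (h+1) (by omega) s') (hP0 s a s')
            _ = ((H - (h+1) : ℕ) : ℝ) := by rw [← sum_mul, hP1, one_mul]
        have hcast : ((H - (h+1) : ℕ) : ℝ) + 1 = ((H - h : ℕ) : ℝ) := by
          have : (H - h) = (H - (h+1)) + 1 := by omega
          rw [this]; push_cast; ring
        linarith [hr1 s a]
      calc ∑ a, π h s a * (r s a + ∑ s', P s a s' * val H π P r (h+1) s')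
          ≤ ∑ a, π h s a * ((H - h : ℕ) : ℝ) := sum_le_sum fun a _ => key a
        _ = ((H - h : ℕ) : ℝ) := by rw [← sum_mul, hπ1, one_mul]
    · rw [val_eq_of_ge H π P r hhH s]; positivity

lemma aux_scalar (Hr Sq Sp D : ℝ) (hH : 1 ≤ Hr) (hSq : 0 ≤ Sq) (hSp : 0 ≤ Sp)
    (hD : 0 ≤ D) (key : (Sq - Sp) ^ 2 ≤ 2 * Hr * D * (Sq + Sp)) :
    Sq ≤ (1 + 1 / Hr) * Sp + 3 * Hr ^ 2 * D := by
  have hHr0 : (0:ℝ) < Hr := by linarith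
  have hb : 0 ≤ Hr * D := mul_nonneg hHr0.le hD
  have h2 : (2 * Hr + 1) * (Sq - Sp) ≤ (Sq + Sp) + Hr * D * (2 * Hr + 1) ^ 2 / 2 := by
    rcases le_or_gt (Sq - Sp) 0 with ht | ht
    · nlinarith [sq_nonneg (2 * Hr + 1)]
    · have hL : 0 ≤ (2 * Hr + 1) * (Sq - Sp) := by nlinarith
      have hR : 0 ≤ (Sq + Sp) + Hr * D * (2 * Hr + 1) ^ 2 / 2 := by positivity
      have hsq : ((2 * Hr + 1) * (Sq - Sp)) ^ 2
          ≤ ((Sq + Sp) + Hr * D * (2 * Hr + 1) ^ 2 / 2) ^ 2 := by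
        nlinarith [mul_le_mul_of_nonneg_left key (sq_nonneg (2 * Hr + 1)),
          sq_nonneg ((Sq + Sp) - Hr * D * (2 * Hr + 1) ^ 2 / 2)]
      exact (pow_le_pow_iff_left₀ hL hR (by norm_num)).mp hsq
  have h3 : Hr * D * (2 * Hr + 1) ^ 2 ≤ 12 * Hr ^ 3 * D := by
    nlinarith [mul_le_mul_of_nonneg_left (show (2 * Hr + 1) ^ 2 ≤ 12 * Hr ^ 2 by nlinarith) hb]
  have main : Hr * Sq ≤ (Hr + 1) * Sp + 3 * Hr ^ 3 * D := by nlinarith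
  rw [show (1 + 1 / Hr) * Sp + 3 * Hr ^ 2 * D
      = ((Hr + 1) * Sp + 3 * Hr ^ 3 * D) / Hr by field_simp,
    le_div_iff₀ hHr0]
  nlinarith [main]

lemma change_of_measure (H : ℕ) (hH : 1 ≤ H) (p q f : S → ℝ)
    (hp0 : ∀ s, 0 ≤ p s) (hq0 : ∀ s, 0 ≤ q s)
    (hf0 : ∀ s, 0 ≤ f s) (hfH : ∀ s, f s ≤ (H : ℝ)) :
    ∑ s, q s * f s ≤ (1 + 1 / (H : ℝ)) * ∑ s, p s * f s
      + 3 * (H : ℝ) ^ 2 * ∑ s, (Real.sqrt (q s) - Real.sqrt (p s)) ^ 2 := by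
  have hHr : (1:ℝ) ≤ (H : ℝ) := by exact_mod_cast hH
  set Sq := ∑ s, q s * f s with hSqdef
  set Sp := ∑ s, p s * f s with hSpdef
  set D := ∑ s, (Real.sqrt (q s) - Real.sqrt (p s)) ^ 2 with hDdef
  have hSq : 0 ≤ Sq := sum_nonneg fun s _ => mul_nonneg (hq0 s) (hf0 s)
  have hSp : 0 ≤ Sp := sum_nonneg fun s _ => mul_nonneg (hp0 s) (hf0 s)
  have hD : 0 ≤ D := sum_nonneg fun s _ => sq_nonneg _
  have key : (Sq - Sp) ^ 2 ≤ 2 * (H : ℝ) * D * (Sq + Sp) := by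
    have cs := sum_mul_sq_le_sq_mul_sq univ
      (fun s => (Real.sqrt (q s) - Real.sqrt (p s)) * Real.sqrt (f s))
      (fun s => (Real.sqrt (q s) + Real.sqrt (p s)) * Real.sqrt (f s))
    have e1 : ∑ s, ((Real.sqrt (q s) - Real.sqrt (p s)) * Real.sqrt (f s))
        * ((Real.sqrt (q s) + Real.sqrt (p s)) * Real.sqrt (f s)) = Sq - Sp := by
      rw [hSqdef, hSpdef, ← sum_sub_distrib]
      refine sum_congr rfl fun s _ => ?_
      have hq := Real.sq_sqrt (hq0 s)
      have hp := Real.sq_sqrt (hp0 s)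
      have hf := Real.mul_self_sqrt (hf0 s)
      have : ((Real.sqrt (q s) - Real.sqrt (p s)) * Real.sqrt (f s))
          * ((Real.sqrt (q s) + Real.sqrt (p s)) * Real.sqrt (f s))
          = (Real.sqrt (q s) ^ 2 - Real.sqrt (p s) ^ 2)
            * (Real.sqrt (f s) * Real.sqrt (f s)) := by ring
      rw [this, hq, hp, hf]; ring
    have e2 : ∑ s, ((Real.sqrt (q s) - Real.sqrt (p s)) * Real.sqrt (f s)) ^ 2
        ≤ (H : ℝ) * D := by
      rw [hDdef, mul_sum]
      refine sum_le_sum fun s _ => ?_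
      have hf := Real.mul_self_sqrt (hf0 s)
      have : ((Real.sqrt (q s) - Real.sqrt (p s)) * Real.sqrt (f s)) ^ 2
          = (Real.sqrt (q s) - Real.sqrt (p s)) ^ 2 * (Real.sqrt (f s) * Real.sqrt (f s)) := by
        ring
      rw [this, hf]
      calc (Real.sqrt (q s) - Real.sqrt (p s)) ^ 2 * f s
          ≤ (Real.sqrt (q s) - Real.sqrt (p s)) ^ 2 * (H : ℝ) :=
            mul_le_mul_of_nonneg_left (hfH s) (sq_nonneg _)
        _ = (H : ℝ) * (Real.sqrt (q s) - Real.sqrt (p s)) ^ 2 := by ring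
    have e3 : ∑ s, ((Real.sqrt (q s) + Real.sqrt (p s)) * Real.sqrt (f s)) ^ 2
        ≤ 2 * (Sq + Sp) := by
      have step : ∀ s : S, ((Real.sqrt (q s) + Real.sqrt (p s)) * Real.sqrt (f s)) ^ 2
          ≤ 2 * (q s * f s + p s * f s) := by
        intro s
        have hf := Real.mul_self_sqrt (hf0 s)
        have hq := Real.sq_sqrt (hq0 s)
        have hp := Real.sq_sqrt (hp0 s)
        have h1 : ((Real.sqrt (q s) + Real.sqrt (p s)) * Real.sqrt (f s)) ^ 2
            = (Real.sqrt (q s) + Real.sqrt (p s)) ^ 2 * (Real.sqrt (f s) * Real.sqrt (f s)) := by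
          ring
        rw [h1, hf]
        have h2 : (Real.sqrt (q s) + Real.sqrt (p s)) ^ 2 ≤ 2 * (q s + p s) := by
          nlinarith [sq_nonneg (Real.sqrt (q s) - Real.sqrt (p s))]
        nlinarith [hf0 s, mul_le_mul_of_nonneg_right h2 (hf0 s)]
      calc ∑ s, ((Real.sqrt (q s) + Real.sqrt (p s)) * Real.sqrt (f s)) ^ 2
          ≤ ∑ s, 2 * (q s * f s + p s * f s) := sum_le_sum fun s _ => step s
        _ = 2 * (Sq + Sp) := by
            rw [hSqdef, hSpdef, ← mul_sum, sum_add_distrib]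
    have hx : 0 ≤ ∑ s, ((Real.sqrt (q s) + Real.sqrt (p s)) * Real.sqrt (f s)) ^ 2 :=
      sum_nonneg fun s _ => sq_nonneg _
    calc (Sq - Sp) ^ 2 = (∑ s, ((Real.sqrt (q s) - Real.sqrt (p s)) * Real.sqrt (f s))
          * ((Real.sqrt (q s) + Real.sqrt (p s)) * Real.sqrt (f s))) ^ 2 := by rw [e1]
      _ ≤ (∑ s, ((Real.sqrt (q s) - Real.sqrt (p s)) * Real.sqrt (f s)) ^ 2)
          * ∑ s, ((Real.sqrt (q s) + Real.sqrt (p s)) * Real.sqrt (f s)) ^ 2 := cs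
      _ ≤ ((H : ℝ) * D) * (2 * (Sq + Sp)) :=
          mul_le_mul e2 e3 hx (mul_nonneg (by linarith) hD)
      _ = 2 * (H : ℝ) * D * (Sq + Sp) := by ring
  exact aux_scalar (H : ℝ) Sq Sp D hHr hSq hSp hD key

theorem hellinger_value_change_of_measure_induction
    (H : ℕ) (hH : 1 ≤ H)
    (π : ℕ → S → A → ℝ) (P Phat : S → A → S → ℝ) (r : S → A → ℝ)
    (hπ0 : ∀ h s a, 0 ≤ π h s a) (hπ1 : ∀ h s, ∑ a, π h s a = 1)
    (hP0 : ∀ s a s', 0 ≤ P s a s') (hP1 : ∀ s a, ∑ s', P s a s' = 1)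
    (hPhat0 : ∀ s a s', 0 ≤ Phat s a s') (hPhat1 : ∀ s a, ∑ s', Phat s a s' = 1)
    (hr0 : ∀ s a, 0 ≤ r s a) (hr1 : ∀ s a, r s a ≤ 1) :
    ∀ h ≤ H, ∀ s : S,
      val H π Phat r h s ≤
        (1 + 1 / (H : ℝ)) ^ (H - h) *
          (val H π P r h s +
            val H π P
              (fun s a => 3 * (H : ℝ) ^ 2 *
                ∑ s', (Real.sqrt (Phat s a s') - Real.sqrt (P s a s')) ^ 2)
              h s) := by
  have hHr : (1:ℝ) ≤ (H : ℝ) := by exact_mod_cast hH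
  set r2 : S → A → ℝ := fun s a => 3 * (H : ℝ) ^ 2 *
      ∑ s', (Real.sqrt (Phat s a s') - Real.sqrt (P s a s')) ^ 2 with hr2def
  set c : ℝ := 1 + 1 / (H : ℝ) with hcdef
  have hc1 : (1:ℝ) ≤ c := by
    have : (0:ℝ) < 1 / (H : ℝ) := by positivity
    rw [hcdef]; linarith
  have hc0 : (0:ℝ) ≤ c := by linarith
  have hr20 : ∀ s a, 0 ≤ r2 s a := fun s a =>
    mul_nonneg (by positivity) (sum_nonneg fun _ _ => sq_nonneg _)
  have hVhat0 : ∀ h s, 0 ≤ val H π Phat r h s := val_nonneg H π Phat r hπ0 hPhat0 hr0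
  have hVhatH : ∀ h s, val H π Phat r h s ≤ (H : ℝ) := by
    intro h s
    refine (val_le H π Phat r hπ0 hπ1 hPhat0 hPhat1 hr1 h s).trans ?_
    exact_mod_cast Nat.cast_le.mpr (Nat.sub_le H h)
  have hV0 : ∀ h s, 0 ≤ val H π P r h s := val_nonneg H π P r hπ0 hP0 hr0
  have hW0 : ∀ h s, 0 ≤ val H π P r2 h s := val_nonneg H π P r2 hπ0 hP0 hr20
  suffices key : ∀ n, ∀ h, h ≤ H → H - h ≤ n → ∀ s : S,
      val H π Phat r h s ≤ c ^ (H - h) * (val H π P r h s + val H π P r2 h s) by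
    intro h hh s; exact key (H - h) h hh le_rfl s
  intro n
  induction n with
  | zero =>
    intro h hh hn s
    have hhH : ¬ h < H := by omega
    rw [val_eq_of_ge H π Phat r hhH s, val_eq_of_ge H π P r hhH s,
      val_eq_of_ge H π P r2 hhH s]
    simp
  | succ n ih =>
    intro h hh hn s
    by_cases hhH : h < H
    · have hih : ∀ s' : S, val H π Phat r (h+1) s'
          ≤ c ^ (H - (h+1)) * (val H π P r (h+1) s' + val H π P r2 (h+1) s') :=
        fun s' => ih (h+1) (by omega) (by omega) s'
      have hpow : c ^ (H - h) = c * c ^ (H - (h+1)) := by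
        rw [show H - h = (H - (h+1)) + 1 from by omega, pow_succ']
      have hcpow1 : (1:ℝ) ≤ c ^ (H - h) := one_le_pow₀ hc1
      have Tnn : ∀ a : A, 0 ≤ ∑ s', P s a s'
          * (val H π P r (h+1) s' + val H π P r2 (h+1) s') := fun a =>
        sum_nonneg fun s' _ => mul_nonneg (hP0 _ _ _) (add_nonneg (hV0 _ _) (hW0 _ _))
      rw [val_eq_of_lt H π Phat r hhH s]
      calc ∑ a, π h s a * (r s a + ∑ s', Phat s a s' * val H π Phat r (h+1) s')
          ≤ ∑ a, π h s a * (r s a + r2 s a + c ^ (H - h)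
              * ∑ s', P s a s' * (val H π P r (h+1) s' + val H π P r2 (h+1) s')) := by
            refine sum_le_sum fun a _ => mul_le_mul_of_nonneg_left ?_ (hπ0 h s a)
            have step1 : ∑ s', Phat s a s' * val H π Phat r (h+1) s'
                ≤ c * (∑ s', P s a s' * val H π Phat r (h+1) s') + r2 s a := by
              have := change_of_measure H hH (P s a) (Phat s a)
                (val H π Phat r (h+1)) (fun s' => hP0 s a s') (fun s' => hPhat0 s a s')
                (fun s' => hVhat0 (h+1) s') (fun s' => hVhatH (h+1) s')
              rw [hr2def, hcdef]
              exact this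
            have step2 : ∑ s', P s a s' * val H π Phat r (h+1) s'
                ≤ c ^ (H - (h+1)) * ∑ s', P s a s'
                  * (val H π P r (h+1) s' + val H π P r2 (h+1) s') := by
              calc ∑ s', P s a s' * val H π Phat r (h+1) s'
                  ≤ ∑ s', P s a s' * (c ^ (H - (h+1))
                      * (val H π P r (h+1) s' + val H π P r2 (h+1) s')) :=
                    sum_le_sum fun s' _ =>
                      mul_le_mul_of_nonneg_left (hih s') (hP0 s a s')
                _ = c ^ (H - (h+1)) * ∑ s', P s a s'
                      * (val H π P r (h+1) s' + val H π P r2 (h+1) s') := by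
                    rw [mul_sum]; exact sum_congr rfl fun s' _ => by ring
            have step2' : c * (∑ s', P s a s' * val H π Phat r (h+1) s')
                ≤ c ^ (H - h) * ∑ s', P s a s'
                  * (val H π P r (h+1) s' + val H π P r2 (h+1) s') := by
              rw [hpow, mul_assoc]
              exact mul_le_mul_of_nonneg_left step2 hc0
            linarith
        _ ≤ ∑ a, π h s a * (c ^ (H - h) * (r s a + r2 s a
              + ∑ s', P s a s' * (val H π P r (h+1) s' + val H π P r2 (h+1) s'))) := by
            refine sum_le_sum fun a _ => mul_le_mul_of_nonneg_left ?_ (hπ0 h s a)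
            have h1 : r s a + r2 s a ≤ c ^ (H - h) * (r s a + r2 s a) :=
              le_mul_of_one_le_left (add_nonneg (hr0 s a) (hr20 s a)) hcpow1
            nlinarith [Tnn a]
        _ = c ^ (H - h) * (val H π P r h s + val H π P r2 h s) := by
            rw [val_eq_of_lt H π P r hhH s, val_eq_of_lt H π P r2 hhH s,
              ← sum_add_distrib, mul_sum]
            refine sum_congr rfl fun a _ => ?_
            have hsplit : ∑ s', P s a s'
                * (val H π P r (h+1) s' + val H π P r2 (h+1) s')
                = (∑ s', P s a s' * val H π P r (h+1) s')
                  + ∑ s', P s a s' * val H π P r2 (h+1) s' := by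
              rw [← sum_add_distrib]; exact sum_congr rfl fun s' _ => mul_add _ _ _
            rw [hsplit]; ring
    · have h0 : ¬ h < H := hhH
      rw [val_eq_of_ge H π Phat r h0 s, val_eq_of_ge H π P r h0 s,
        val_eq_of_ge H π P r2 h0 s]
      simp
end

section
/- Equivalently in occupancy-measure form: for any policy π, dynamics P and P̂, and reward r : S×A → [0,1], ∑_{h,s,a} q_h(s,a|π,P̂)·r(s,a) ≤ 3 ∑_{h,s,a} q_h(s,a|π,P)·r(s,a) + 9H² ∑_{h,s,a} q_h(s,a|π,P)·D²_H(P(·|s,a), P̂(·|s,a)). -/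
open Finset

variable {S A : Type*} [Fintype S] [Fintype A] [DecidableEq S]

/-- Occupancy measure: probability of being at `(s,a)` at step `h` under
nonstationary policy `π` and dynamics `P` (with `P s a s'` the transition
probability), starting from `s0`. -/
def occ (π : ℕ → S → A → ℝ) (P : S → A → S → ℝ) (s0 : S) :
    ℕ → S → A → ℝ
  | 0, s, a => (if s = s0 then 1 else 0) * π 0 s a
  | h + 1, s, a => π (h + 1) s a * ∑ s', ∑ a', P s' a' s * occ π P s0 h s' a'

/-- Error accumulation term for the change-of-measure argument. -/
noncomputable def errf (π : ℕ → S → A → ℝ) (P Phat : S → A → S → ℝ) (s0 : S) (c K : ℝ) :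
    ℕ → S → A → ℝ
  | 0, _, _ => 0
  | h + 1, s, a =>
      π (h + 1) s a * ∑ s', ∑ a', Phat s' a' s * errf π P Phat s0 c K h s' a' +
      c ^ h * K * (π (h + 1) s a *
        ∑ s', ∑ a', (Real.sqrt (P s' a' s) - Real.sqrt (Phat s' a' s)) ^ 2 *
          occ π P s0 h s' a')

lemma key_sqrt_ineq (lam p q : ℝ) (hlam : 0 < lam) (hp : 0 ≤ p) (hq : 0 ≤ q) :
    q ≤ (1 + lam) * p + (1 + 1 / lam) * (Real.sqrt p - Real.sqrt q) ^ 2 := by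
  have hx : Real.sqrt p ^ 2 = p := Real.sq_sqrt hp
  have hy : Real.sqrt q ^ 2 = q := Real.sq_sqrt hq
  set x := Real.sqrt p
  set y := Real.sqrt q
  have h1 : lam * ((1 + 1 / lam) * (x - y) ^ 2) = (lam + 1) * (x - y) ^ 2 := by
    field_simp
  rw [← hx, ← hy]
  nlinarith [sq_nonneg ((1 + lam) * x - y), hlam, h1, sq_nonneg (x - y)]

section aux

variable (π : ℕ → S → A → ℝ) (P Phat : S → A → S → ℝ) (s0 : S)

lemma occ_nonneg (hπ0 : ∀ h s a, 0 ≤ π h s a) (hP0 : ∀ s a s', 0 ≤ P s a s') :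
    ∀ h s a, 0 ≤ occ π P s0 h s a := by
  intro h
  induction h with
  | zero =>
      intro s a
      simp only [occ]
      exact mul_nonneg (by split <;> norm_num) (hπ0 _ _ _)
  | succ h ih =>
      intro s a
      simp only [occ]
      refine mul_nonneg (hπ0 _ _ _) (Finset.sum_nonneg fun s' _ =>
        Finset.sum_nonneg fun a' _ => mul_nonneg (hP0 _ _ _) (ih _ _))

lemma errf_nonneg (c K : ℝ) (hc : 0 ≤ c) (hK : 0 ≤ K)
    (hπ0 : ∀ h s a, 0 ≤ π h s a) (hP0 : ∀ s a s', 0 ≤ P s a s')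
    (hPhat0 : ∀ s a s', 0 ≤ Phat s a s') :
    ∀ h s a, 0 ≤ errf π P Phat s0 c K h s a := by
  intro h
  induction h with
  | zero => intro s a; simp [errf]
  | succ h ih =>
      intro s a
      simp only [errf]
      have h1 : 0 ≤ π (h + 1) s a * ∑ s', ∑ a', Phat s' a' s *
          errf π P Phat s0 c K h s' a' :=
        mul_nonneg (hπ0 _ _ _) (Finset.sum_nonneg fun s' _ =>
          Finset.sum_nonneg fun a' _ => mul_nonneg (hPhat0 _ _ _) (ih _ _))
      have h2 : 0 ≤ c ^ h * K * (π (h + 1) s a *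
          ∑ s', ∑ a', (Real.sqrt (P s' a' s) - Real.sqrt (Phat s' a' s)) ^ 2 *
            occ π P s0 h s' a') := by
        refine mul_nonneg (mul_nonneg (pow_nonneg hc _) hK)
          (mul_nonneg (hπ0 _ _ _) (Finset.sum_nonneg fun s' _ =>
            Finset.sum_nonneg fun a' _ =>
              mul_nonneg (sq_nonneg _) (occ_nonneg π P s0 hπ0 hP0 _ _ _)))
      linarith

lemma occ_dom (lam : ℝ) (hlam : 0 < lam)
    (hπ0 : ∀ h s a, 0 ≤ π h s a)
    (hP0 : ∀ s a s', 0 ≤ P s a s') (hPhat0 : ∀ s a s', 0 ≤ Phat s a s') :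
    ∀ h s a, occ π Phat s0 h s a ≤
      (1 + lam) ^ h * occ π P s0 h s a +
        errf π P Phat s0 (1 + lam) (1 + 1 / lam) h s a := by
  intro h
  induction h with
  | zero => intro s a; simp [occ, errf]
  | succ h ih =>
      intro s a
      have hq0 := occ_nonneg π P s0 hπ0 hP0
      have hpow : (0:ℝ) ≤ (1 + lam) ^ h := by positivity
      have key : ∀ s' a',
          Phat s' a' s * ((1 + lam) ^ h * occ π P s0 h s' a' +
              errf π P Phat s0 (1 + lam) (1 + 1 / lam) h s' a') ≤
            (1 + lam) ^ h * (((1 + lam) * P s' a' s +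
                (1 + 1 / lam) * (Real.sqrt (P s' a' s) - Real.sqrt (Phat s' a' s)) ^ 2) *
                occ π P s0 h s' a') +
              Phat s' a' s * errf π P Phat s0 (1 + lam) (1 + 1 / lam) h s' a' := by
        intro s' a'
        have hb := key_sqrt_ineq lam (P s' a' s) (Phat s' a' s) hlam (hP0 _ _ _) (hPhat0 _ _ _)
        have h2 := mul_le_mul_of_nonneg_right hb (hq0 h s' a')
        have h3 := mul_le_mul_of_nonneg_left h2 hpow
        nlinarith [h3]
      calc occ π Phat s0 (h + 1) s a
          ≤ π (h + 1) s a * ∑ s', ∑ a', Phat s' a' s *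
              ((1 + lam) ^ h * occ π P s0 h s' a' +
                errf π P Phat s0 (1 + lam) (1 + 1 / lam) h s' a') := by
            simp only [occ]
            refine mul_le_mul_of_nonneg_left (Finset.sum_le_sum fun s' _ =>
              Finset.sum_le_sum fun a' _ =>
              mul_le_mul_of_nonneg_left (ih s' a') (hPhat0 _ _ _)) (hπ0 _ _ _)
        _ ≤ π (h + 1) s a * ∑ s', ∑ a',
              ((1 + lam) ^ h * (((1 + lam) * P s' a' s +
                (1 + 1 / lam) * (Real.sqrt (P s' a' s) - Real.sqrt (Phat s' a' s)) ^ 2) *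
                occ π P s0 h s' a') +
              Phat s' a' s * errf π P Phat s0 (1 + lam) (1 + 1 / lam) h s' a') :=
            mul_le_mul_of_nonneg_left (Finset.sum_le_sum fun s' _ =>
              Finset.sum_le_sum fun a' _ => key s' a') (hπ0 _ _ _)
        _ = (1 + lam) ^ (h + 1) * occ π P s0 (h + 1) s a +
            errf π P Phat s0 (1 + lam) (1 + 1 / lam) (h + 1) s a := by
            have expand : ∀ s' a',
                (1 + lam) ^ h * (((1 + lam) * P s' a' s +
                  (1 + 1 / lam) * (Real.sqrt (P s' a' s) - Real.sqrt (Phat s' a' s)) ^ 2) *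
                  occ π P s0 h s' a') +
                Phat s' a' s * errf π P Phat s0 (1 + lam) (1 + 1 / lam) h s' a' =
                (1 + lam) ^ (h + 1) * (P s' a' s * occ π P s0 h s' a') +
                  (Phat s' a' s * errf π P Phat s0 (1 + lam) (1 + 1 / lam) h s' a' +
                    (1 + lam) ^ h * ((1 + 1 / lam) *
                      ((Real.sqrt (P s' a' s) - Real.sqrt (Phat s' a' s)) ^ 2 *
                        occ π P s0 h s' a'))) := fun _ _ => by ring
            rw [Finset.sum_congr rfl fun s' _ => Finset.sum_congr rfl fun a' _ => expand s' a']
            simp only [occ, errf, Finset.sum_add_distrib, mul_add, ← Finset.mul_sum]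
            ring

lemma errf_mass (c K : ℝ)
    (hπ1 : ∀ h s, ∑ a, π h s a = 1) (hPhat1 : ∀ s a, ∑ s', Phat s a s' = 1) :
    ∀ h, ∑ s, ∑ a, errf π P Phat s0 c K h s a =
      ∑ h' ∈ Finset.range h, c ^ h' * K *
        ∑ s, ∑ a, occ π P s0 h' s a *
          ∑ s', (Real.sqrt (P s a s') - Real.sqrt (Phat s a s')) ^ 2 := by
  intro h
  induction h with
  | zero => simp [errf]
  | succ h ih =>
      rw [Finset.sum_range_succ, ← ih]
      simp only [errf, Finset.sum_add_distrib]
      congr 1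
      · -- transported error mass is preserved
        have : ∀ s : S, ∑ a, π (h+1) s a * ∑ s', ∑ a', Phat s' a' s *
            errf π P Phat s0 c K h s' a' =
            ∑ s', ∑ a', Phat s' a' s * errf π P Phat s0 c K h s' a' := by
          intro s
          rw [← Finset.sum_mul, hπ1, one_mul]
        rw [Finset.sum_congr rfl fun s _ => this s]
        rw [Finset.sum_comm]
        refine Finset.sum_congr rfl fun s' _ => ?_
        rw [Finset.sum_comm]
        refine Finset.sum_congr rfl fun a' _ => ?_
        rw [← Finset.sum_mul, hPhat1, one_mul]
      · -- new error mass
        have : ∀ s : S, ∑ a, c ^ h * K * (π (h+1) s a *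
            ∑ s', ∑ a', (Real.sqrt (P s' a' s) - Real.sqrt (Phat s' a' s)) ^ 2 *
              occ π P s0 h s' a') =
            c ^ h * K * ∑ s', ∑ a',
              (Real.sqrt (P s' a' s) - Real.sqrt (Phat s' a' s)) ^ 2 *
              occ π P s0 h s' a' := by
          intro s
          rw [← Finset.mul_sum]
          congr 1
          rw [← Finset.sum_mul, hπ1, one_mul]
        rw [Finset.sum_congr rfl fun s _ => this s, ← Finset.mul_sum]
        congr 1
        rw [Finset.sum_comm]
        refine Finset.sum_congr rfl fun s' _ => ?_
        rw [Finset.sum_comm]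
        refine Finset.sum_congr rfl fun a' _ => ?_
        rw [← Finset.sum_mul, mul_comm]

end aux

lemma one_add_inv_pow_le_three (H : ℕ) (hH : 1 ≤ H) :
    (1 + 1 / (H:ℝ)) ^ H ≤ 3 := by
  have hH0 : (0:ℝ) < H := by exact_mod_cast Nat.pos_of_ne_zero (by omega)
  have h1 : (1 + 1 / (H:ℝ)) ≤ Real.exp (1 / H) := by
    have := Real.add_one_le_exp (1 / (H:ℝ))
    linarith
  have h2 : (1 + 1 / (H:ℝ)) ^ H ≤ Real.exp (1 / H) ^ H := by
    apply pow_le_pow_left₀ (by positivity) h1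
  have h3 : Real.exp (1 / (H:ℝ)) ^ H = Real.exp 1 := by
    rw [← Real.exp_nat_mul]
    congr 1
    field_simp
  have h4 : Real.exp 1 < 3 := by
    have := Real.exp_one_lt_d9
    linarith
  calc (1 + 1 / (H:ℝ)) ^ H ≤ Real.exp (1 / H) ^ H := h2
    _ = Real.exp 1 := h3
    _ ≤ 3 := h4.le

theorem occupancy_change_of_measure
    (H : ℕ) (hH : 1 ≤ H)
    (π : ℕ → S → A → ℝ) (P Phat : S → A → S → ℝ) (r : S → A → ℝ) (s0 : S)
    (hπ0 : ∀ h s a, 0 ≤ π h s a) (hπ1 : ∀ h s, ∑ a, π h s a = 1)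
    (hP0 : ∀ s a s', 0 ≤ P s a s') (hP1 : ∀ s a, ∑ s', P s a s' = 1)
    (hPhat0 : ∀ s a s', 0 ≤ Phat s a s') (hPhat1 : ∀ s a, ∑ s', Phat s a s' = 1)
    (hr0 : ∀ s a, 0 ≤ r s a) (hr1 : ∀ s a, r s a ≤ 1) :
    ∑ h ∈ Finset.range H, ∑ s, ∑ a, occ π Phat s0 h s a * r s a ≤
      3 * ∑ h ∈ Finset.range H, ∑ s, ∑ a, occ π P s0 h s a * r s a +
        9 * (H : ℝ) ^ 2 *
          ∑ h ∈ Finset.range H, ∑ s, ∑ a, occ π P s0 h s a *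
            ∑ s', (Real.sqrt (P s a s') - Real.sqrt (Phat s a s')) ^ 2 := by
  have hHpos : (0:ℝ) < H := by exact_mod_cast Nat.pos_of_ne_zero (by omega)
  set lam : ℝ := 1 / (H:ℝ) with hlam_def
  have hlam : 0 < lam := by positivity
  have hK : (1:ℝ) + 1 / lam = 1 + H := by
    rw [hlam_def]; field_simp
  have hc1 : (1:ℝ) ≤ 1 + lam := by linarith
  have hc3 : (1 + lam) ^ H ≤ 3 := one_add_inv_pow_le_three H hH
  have hq0 := occ_nonneg π P s0 hπ0 hP0
  have hq0' := occ_nonneg π Phat s0 hπ0 hPhat0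
  have herr0 := errf_nonneg π P Phat s0 (1 + lam) (1 + 1 / lam)
    (by linarith) (by rw [hK]; positivity) hπ0 hP0 hPhat0
  have hdom := occ_dom π P Phat s0 lam hlam hπ0 hP0 hPhat0
  have hmass := errf_mass π P Phat s0 (1 + lam) (1 + 1 / lam) hπ1 hPhat1
  set RR : ℕ → ℝ := fun h => ∑ s, ∑ a, occ π P s0 h s a * r s a with hRR
  set EE : ℕ → ℝ := fun h => ∑ s, ∑ a, occ π P s0 h s a *
    ∑ s', (Real.sqrt (P s a s') - Real.sqrt (Phat s a s')) ^ 2 with hEE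
  have hRnn : ∀ h, 0 ≤ RR h := fun h => Finset.sum_nonneg fun s _ =>
    Finset.sum_nonneg fun a _ => mul_nonneg (hq0 _ _ _) (hr0 _ _)
  have hEnn : ∀ h, 0 ≤ EE h := fun h => Finset.sum_nonneg fun s _ =>
    Finset.sum_nonneg fun a _ => mul_nonneg (hq0 _ _ _)
      (Finset.sum_nonneg fun s' _ => sq_nonneg _)
  -- per-step bound
  have hstep : ∀ h, ∑ s, ∑ a, occ π Phat s0 h s a * r s a ≤
      (1 + lam) ^ h * RR h + ∑ s, ∑ a, errf π P Phat s0 (1 + lam) (1 + 1 / lam) h s a := by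
    intro h
    have h1 : ∑ s, ∑ a, occ π Phat s0 h s a * r s a ≤
        ∑ s, ∑ a, ((1 + lam) ^ h * occ π P s0 h s a * r s a +
          errf π P Phat s0 (1 + lam) (1 + 1 / lam) h s a) := by
      refine Finset.sum_le_sum fun s _ => Finset.sum_le_sum fun a _ => ?_
      have h2 : occ π Phat s0 h s a * r s a ≤
          ((1 + lam) ^ h * occ π P s0 h s a +
            errf π P Phat s0 (1 + lam) (1 + 1 / lam) h s a) * r s a :=
        mul_le_mul_of_nonneg_right (hdom h s a) (hr0 s a)
      have h3 : errf π P Phat s0 (1 + lam) (1 + 1 / lam) h s a * r s a ≤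
          errf π P Phat s0 (1 + lam) (1 + 1 / lam) h s a :=
        mul_le_of_le_one_right (herr0 h s a) (hr1 s a)
      nlinarith [h2, h3]
    calc ∑ s, ∑ a, occ π Phat s0 h s a * r s a
        ≤ ∑ s, ∑ a, ((1 + lam) ^ h * occ π P s0 h s a * r s a +
            errf π P Phat s0 (1 + lam) (1 + 1 / lam) h s a) := h1
      _ = (1 + lam) ^ h * RR h +
          ∑ s, ∑ a, errf π P Phat s0 (1 + lam) (1 + 1 / lam) h s a := by
          simp only [Finset.sum_add_distrib, hRR, Finset.mul_sum]
          congr 1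
          refine Finset.sum_congr rfl fun s _ => Finset.sum_congr rfl fun a _ => by ring
  -- bound on the error masses
  have hmassbd : ∀ h ∈ Finset.range H,
      ∑ s, ∑ a, errf π P Phat s0 (1 + lam) (1 + 1 / lam) h s a ≤
        3 * (1 + (H:ℝ)) * ∑ h' ∈ Finset.range H, EE h' := by
    intro h hh
    rw [hmass h]
    have hsub : Finset.range h ⊆ Finset.range H :=
      Finset.range_subset_range.mpr (le_of_lt (Finset.mem_range.mp hh))
    have tnn : ∀ h', 0 ≤ (1 + lam) ^ h' * (1 + 1 / lam) * EE h' := by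
      intro h'
      have : (0:ℝ) ≤ 1 + 1 / lam := by rw [hK]; positivity
      have := mul_nonneg (mul_nonneg (pow_nonneg (by linarith : (0:ℝ) ≤ 1 + lam) h') this) (hEnn h')
      exact this
    calc ∑ h' ∈ Finset.range h, (1 + lam) ^ h' * (1 + 1 / lam) * EE h'
        ≤ ∑ h' ∈ Finset.range H, (1 + lam) ^ h' * (1 + 1 / lam) * EE h' :=
          Finset.sum_le_sum_of_subset_of_nonneg hsub fun h' _ _ => tnn h'
      _ ≤ ∑ h' ∈ Finset.range H, 3 * (1 + (H:ℝ)) * EE h' := by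
          refine Finset.sum_le_sum fun h' hh' => ?_
          have hp : (1 + lam) ^ h' ≤ 3 := by
            calc (1 + lam) ^ h' ≤ (1 + lam) ^ H :=
                pow_le_pow_right₀ hc1 (le_of_lt (Finset.mem_range.mp hh'))
              _ ≤ 3 := hc3
          rw [hK]
          have h1H : (0:ℝ) ≤ 1 + H := by positivity
          exact mul_le_mul_of_nonneg_right
            (mul_le_mul_of_nonneg_right hp h1H) (hEnn h')
      _ = 3 * (1 + (H:ℝ)) * ∑ h' ∈ Finset.range H, EE h' :=
          (Finset.mul_sum _ _ _).symm
  -- combine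
  have hEsum : 0 ≤ ∑ h' ∈ Finset.range H, EE h' :=
    Finset.sum_nonneg fun h' _ => hEnn h'
  have main : ∑ h ∈ Finset.range H, ∑ s, ∑ a, occ π Phat s0 h s a * r s a ≤
      ∑ h ∈ Finset.range H, ((1 + lam) ^ h * RR h) +
        ∑ h ∈ Finset.range H, (3 * (1 + (H:ℝ)) * ∑ h' ∈ Finset.range H, EE h') := by
    rw [← Finset.sum_add_distrib]
    refine Finset.sum_le_sum fun h hh => ?_
    exact le_trans (hstep h) (by linarith [hmassbd h hh])
  have hR3 : ∑ h ∈ Finset.range H, ((1 + lam) ^ h * RR h) ≤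
      3 * ∑ h ∈ Finset.range H, RR h := by
    rw [Finset.mul_sum]
    refine Finset.sum_le_sum fun h hh => ?_
    have hp : (1 + lam) ^ h ≤ 3 := by
      calc (1 + lam) ^ h ≤ (1 + lam) ^ H :=
          pow_le_pow_right₀ hc1 (le_of_lt (Finset.mem_range.mp hh))
        _ ≤ 3 := hc3
    exact mul_le_mul_of_nonneg_right hp (hRnn h)
  have hM : ∑ h ∈ Finset.range H, (3 * (1 + (H:ℝ)) * ∑ h' ∈ Finset.range H, EE h') ≤
      9 * (H:ℝ) ^ 2 * ∑ h' ∈ Finset.range H, EE h' := by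
    rw [Finset.sum_const, Finset.card_range, nsmul_eq_mul]
    have hH1 : (1:ℝ) ≤ (H:ℝ) := by exact_mod_cast hH
    have h1 : (H:ℝ) * (3 * (1 + (H:ℝ))) ≤ 9 * (H:ℝ) ^ 2 := by nlinarith [hH1]
    calc (H:ℝ) * (3 * (1 + (H:ℝ)) * ∑ h' ∈ Finset.range H, EE h')
        = (H:ℝ) * (3 * (1 + (H:ℝ))) * ∑ h' ∈ Finset.range H, EE h' := by ring
      _ ≤ 9 * (H:ℝ) ^ 2 * ∑ h' ∈ Finset.range H, EE h' :=
          mul_le_mul_of_nonneg_right h1 hEsum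
  calc ∑ h ∈ Finset.range H, ∑ s, ∑ a, occ π Phat s0 h s a * r s a
      ≤ ∑ h ∈ Finset.range H, ((1 + lam) ^ h * RR h) +
        ∑ h ∈ Finset.range H, (3 * (1 + (H:ℝ)) * ∑ h' ∈ Finset.range H, EE h') := main
    _ ≤ 3 * ∑ h ∈ Finset.range H, RR h +
        9 * (H:ℝ) ^ 2 * ∑ h' ∈ Finset.range H, EE h' := by linarith [hR3, hM]
end
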